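/- In the coordinate transport setting (with Φ of class C⁵ and V, W of class C³), for every x ∈ Ω and all indices i, j, k: L[Φ_{ijk}] = −V_{ijk} + Ŵ_{ijk} + (Σ_{s,a} W^{sa} Φ_{ai} Φ_{sjk} + Σ_{s,a} W^{sa} Φ_{aj} Φ_{sik} + Σ_{s,a} W^{sa} Φ_{ak} Φ_{sij}) + (Σ Φ_{abi} Φ^{ap} Φ^{bq} Φ_{pqjk} + Σ Φ_{abj} Φ^{ap} Φ^{bq} Φ_{pqik} + Σ Φ_{abk} Φ^{ap} Φ^{bq} Φ_{pqij}) − 2 Σ Φ_{pbi} Φ_{qcj} Φ_{rak} Φ^{ap} Φ^{bq} Φ^{cr}, where L is the weighted Laplacian applied to the scalar function Φ_{ijk} with fixed indices. -/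

import Mathlib

noncomputable section
open scoped BigOperators
open Filter MeasureTheory

/-- Partial derivative `∂_i f`. -/
def pd {n : ℕ} (f : (Fin n → ℝ) → ℝ) (i : Fin n) : (Fin n → ℝ) → ℝ :=
  fun x => fderiv ℝ f x (Pi.single i 1)

/-- Second partial derivative `f_{ij}`. -/
def pd2 {n : ℕ} (f : (Fin n → ℝ) → ℝ) (i j : Fin n) : (Fin n → ℝ) → ℝ :=
  pd (pd f i) j

/-- Third partial derivative `f_{ijk}`. -/
def pd3 {n : ℕ} (f : (Fin n → ℝ) → ℝ) (i j k : Fin n) : (Fin n → ℝ) → ℝ :=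
  pd (pd2 f i j) k

/-- Fourth partial derivative `f_{ijkl}`. -/
def pd4 {n : ℕ} (f : (Fin n → ℝ) → ℝ) (i j k l : Fin n) : (Fin n → ℝ) → ℝ :=
  pd (pd3 f i j k) l

/-- Fifth partial derivative. -/
def pd5 {n : ℕ} (f : (Fin n → ℝ) → ℝ) (i j k l m : Fin n) : (Fin n → ℝ) → ℝ :=
  pd (pd4 f i j k l) m

/-- The Hessian matrix `D²Φ(x)`, with entries `Φ_{ij}(x)`. -/
def hess {n : ℕ} (Φ : (Fin n → ℝ) → ℝ) (x : Fin n → ℝ) : Matrix (Fin n) (Fin n) ℝ :=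
  Matrix.of fun i j => pd2 Φ i j x

/-- The inverse Hessian matrix, with entries `Φ^{ij}(x)`. -/
def ihess {n : ℕ} (Φ : (Fin n → ℝ) → ℝ) (x : Fin n → ℝ) : Matrix (Fin n) (Fin n) ℝ :=
  (hess Φ x)⁻¹

/-- The gradient `∇Φ(x)`. -/
def grad {n : ℕ} (Φ : (Fin n → ℝ) → ℝ) (x : Fin n → ℝ) : Fin n → ℝ :=
  fun i => pd Φ i x

/-- The Calabi tensor `g_{ij} = Σ Φ_{iab} Φ_{jcd} Φ^{ac} Φ^{bd}`. -/
def calabi {n : ℕ} (Φ : (Fin n → ℝ) → ℝ) (i j : Fin n) (x : Fin n → ℝ) : ℝ :=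
  ∑ a, ∑ b, ∑ c, ∑ d,
    pd3 Φ i a b x * pd3 Φ j c d x * ihess Φ x a c * ihess Φ x b d

/-- `W^i := (∂_i W)(∇Φ)`. -/
def Wop {n : ℕ} (Φ W : (Fin n → ℝ) → ℝ) (i : Fin n) (x : Fin n → ℝ) : ℝ :=
  pd W i (grad Φ x)

/-- `Ŵ_{ij} := Σ_{a,b} W^{ab} Φ_{ai} Φ_{bj}` where `W^{ab} = (∂²_{ab}W)(∇Φ)`. -/
def What2 {n : ℕ} (Φ W : (Fin n → ℝ) → ℝ) (i j : Fin n) (x : Fin n → ℝ) : ℝ :=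
  ∑ a, ∑ b, pd2 W a b (grad Φ x) * pd2 Φ a i x * pd2 Φ b j x

/-- `Ŵ_{ijk} := Σ_{a,b,c} W^{abc} Φ_{ai} Φ_{bj} Φ_{ck}` where `W^{abc} = (∂³_{abc}W)(∇Φ)`. -/
def What3 {n : ℕ} (Φ W : (Fin n → ℝ) → ℝ) (i j k : Fin n) (x : Fin n → ℝ) : ℝ :=
  ∑ a, ∑ b, ∑ c, pd3 W a b c (grad Φ x) * pd2 Φ a i x * pd2 Φ b j x * pd2 Φ c k x

/-- Christoffel symbols `Γ^k_{pq} = ½ Σ_m Φ^{km} Φ_{mpq}` of the Hessian metric. -/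
def Γh {n : ℕ} (Φ : (Fin n → ℝ) → ℝ) (k p q : Fin n) (x : Fin n → ℝ) : ℝ :=
  (1/2) * ∑ m, ihess Φ x k m * pd3 Φ m p q x

/-- Covariant derivative of a (0,1)-tensor: `(∇T)_{p i}`. -/
def covD1 {n : ℕ} (Φ : (Fin n → ℝ) → ℝ) (T : Fin n → (Fin n → ℝ) → ℝ)
    (p i : Fin n) (x : Fin n → ℝ) : ℝ :=
  pd (T i) p x - ∑ m, Γh Φ m p i x * T m x

/-- Covariant derivative of a (0,2)-tensor: `(∇T)_{p i j}`. -/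
def covD2 {n : ℕ} (Φ : (Fin n → ℝ) → ℝ) (T : Fin n → Fin n → (Fin n → ℝ) → ℝ)
    (p i j : Fin n) (x : Fin n → ℝ) : ℝ :=
  pd (T i j) p x - ∑ m, Γh Φ m p i x * T m j x - ∑ m, Γh Φ m p j x * T i m x

/-- Covariant derivative of a (0,3)-tensor: `(∇T)_{p i j k}`. -/
def covD3 {n : ℕ} (Φ : (Fin n → ℝ) → ℝ) (T : Fin n → Fin n → Fin n → (Fin n → ℝ) → ℝ)
    (p i j k : Fin n) (x : Fin n → ℝ) : ℝ :=
  pd (T i j k) p x - ∑ m, Γh Φ m p i x * T m j k x - ∑ m, Γh Φ m p j x * T i m k x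
    - ∑ m, Γh Φ m p k x * T i j m x

/-- Covariant derivative of a (0,4)-tensor: `(∇T)_{p i j k l}`. -/
def covD4 {n : ℕ} (Φ : (Fin n → ℝ) → ℝ)
    (T : Fin n → Fin n → Fin n → Fin n → (Fin n → ℝ) → ℝ)
    (p i j k l : Fin n) (x : Fin n → ℝ) : ℝ :=
  pd (T i j k l) p x - ∑ m, Γh Φ m p i x * T m j k l x - ∑ m, Γh Φ m p j x * T i m k l x
    - ∑ m, Γh Φ m p k x * T i j m l x - ∑ m, Γh Φ m p l x * T i j k m x

/-- Weighted tensor Laplacian of a (0,1)-tensor: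
`(LT)_i = Σ Φ^{pq}(∇∇T)_{pq i} − ½ Σ_p (Σ_m Φ^{pm} V_m + W^p)(∇T)_{p i}`. -/
def LT1 {n : ℕ} (Φ V W : (Fin n → ℝ) → ℝ) (T : Fin n → (Fin n → ℝ) → ℝ)
    (i : Fin n) (x : Fin n → ℝ) : ℝ :=
  (∑ p, ∑ q, ihess Φ x p q * covD2 Φ (covD1 Φ T) p q i x)
    - (1/2) * ∑ p, ((∑ m, ihess Φ x p m * pd V m x) + Wop Φ W p x) * covD1 Φ T p i x

/-- Weighted tensor Laplacian of a (0,2)-tensor. -/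
def LT2 {n : ℕ} (Φ V W : (Fin n → ℝ) → ℝ) (T : Fin n → Fin n → (Fin n → ℝ) → ℝ)
    (i j : Fin n) (x : Fin n → ℝ) : ℝ :=
  (∑ p, ∑ q, ihess Φ x p q * covD3 Φ (covD2 Φ T) p q i j x)
    - (1/2) * ∑ p, ((∑ m, ihess Φ x p m * pd V m x) + Wop Φ W p x) * covD2 Φ T p i j x

/-- Weighted tensor Laplacian of a (0,3)-tensor. -/
def LT3 {n : ℕ} (Φ V W : (Fin n → ℝ) → ℝ) (T : Fin n → Fin n → Fin n → (Fin n → ℝ) → ℝ)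
    (i j k : Fin n) (x : Fin n → ℝ) : ℝ :=
  (∑ p, ∑ q, ihess Φ x p q * covD4 Φ (covD3 Φ T) p q i j k x)
    - (1/2) * ∑ p, ((∑ m, ihess Φ x p m * pd V m x) + Wop Φ W p x) * covD3 Φ T p i j k x

/-- `N_{piab} := Φ_{piab} − ½ Σ_{k,m} Φ^{km}(Φ_{mpi}Φ_{kab} + Φ_{mpa}Φ_{kib} + Φ_{mpb}Φ_{kia})`. -/
def Ncal {n : ℕ} (Φ : (Fin n → ℝ) → ℝ) (p i a b : Fin n) (x : Fin n → ℝ) : ℝ :=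
  pd4 Φ p i a b x - (1/2) * ∑ k, ∑ m, ihess Φ x k m *
    (pd3 Φ m p i x * pd3 Φ k a b x + pd3 Φ m p a x * pd3 Φ k i b x
      + pd3 Φ m p b x * pd3 Φ k i a x)

/-- Riemann curvature `R_{ikjl} := ¼ Σ_{a,m} Φ^{am}(Φ_{ila}Φ_{mkj} − Φ_{ija}Φ_{mkl})`. -/
def Rcal {n : ℕ} (Φ : (Fin n → ℝ) → ℝ) (i k j l : Fin n) (x : Fin n → ℝ) : ℝ :=
  (1/4) * ∑ a, ∑ m, ihess Φ x a m *
    (pd3 Φ i l a x * pd3 Φ m k j x - pd3 Φ i j a x * pd3 Φ m k l x)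

/-- The `h`-norm of a quadratic form `Q` at `x`:
`‖Q‖_h(x) = sup { Σ Q_{ij} v_i v_j : Σ Φ_{ij}(x) v_i v_j = 1 }`. -/
def hnorm {n : ℕ} (Φ : (Fin n → ℝ) → ℝ) (Q : Fin n → Fin n → ℝ) (x : Fin n → ℝ) : ℝ :=
  sSup {r | ∃ v : Fin n → ℝ,
    (∑ i, ∑ j, pd2 Φ i j x * v i * v j) = 1 ∧ r = ∑ i, ∑ j, Q i j * v i * v j}

/-- The matrix `A(x)` with entries `V_{ab} + Ŵ_{ab}`. -/
def Amat {n : ℕ} (Φ V W : (Fin n → ℝ) → ℝ) (x : Fin n → ℝ) : Matrix (Fin n) (Fin n) ℝ :=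
  Matrix.of fun a b => pd2 V a b x + What2 Φ W a b x

/-- The matrix `S_i(x)` with entries `V_{iab} − Ŵ_{iab}`. -/
def Smat {n : ℕ} (Φ V W : (Fin n → ℝ) → ℝ) (i : Fin n) (x : Fin n → ℝ) :
    Matrix (Fin n) (Fin n) ℝ :=
  Matrix.of fun a b => pd3 V i a b x - What3 Φ W i a b x

/-- `H_{ij}(x) := Tr[A(x)⁻¹ · S_i(x) · (D²Φ(x))⁻¹ · S_j(x)]`. -/
def Hten {n : ℕ} (Φ V W : (Fin n → ℝ) → ℝ) (i j : Fin n) (x : Fin n → ℝ) : ℝ :=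
  ((Amat Φ V W x)⁻¹ * Smat Φ V W i x * (hess Φ x)⁻¹ * Smat Φ V W j x).trace

/-- Euclidean operator norm of a matrix. -/
def eOpNorm {n : ℕ} (M : Matrix (Fin n) (Fin n) ℝ) : ℝ :=
  ‖LinearMap.toContinuousLinearMap (Matrix.toEuclideanLin M)‖

/-- Directional derivative of the Hessian: the matrix `∂_e D²F(x)`. -/
def dirHess {n : ℕ} (F : (Fin n → ℝ) → ℝ) (e : Fin n → ℝ) (x : Fin n → ℝ) :
    Matrix (Fin n) (Fin n) ℝ :=
  Matrix.of fun i j => ∑ k, e k * pd3 F k i j x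

/-- The quadratic form `⟨Qy, y⟩`. -/
def qform {n : ℕ} (Q : Matrix (Fin n) (Fin n) ℝ) (y : Fin n → ℝ) : ℝ :=
  ∑ i, ∑ j, Q i j * y j * y i

/-!
Taking logarithms, the Monge–Ampère equation reads `log det D²Φ = W ∘ ∇Φ - V` on `Ω`, and by
Jacobi's formula its `i`-th derivative is `tr((D²Φ)⁻¹ ∂ᵢD²Φ) = ∂ᵢ(W ∘ ∇Φ) - Vᵢ`. Differentiating
twice more, with `∂ₖ(D²Φ)⁻¹ = -(D²Φ)⁻¹ ∂ₖD²Φ (D²Φ)⁻¹`, the left side becomes `tr((D²Φ)⁻¹ ∂ᵢⱼₖD²Φ)`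
minus traces of products of two or three derivatives of `D²Φ` interleaved with `(D²Φ)⁻¹`, while the
chain rule expands `∂ᵢⱼₖ(W ∘ ∇Φ)` into `Σ W^p Φ_{ijkp}` plus the `W`-terms of the formula. Symmetry
of the higher derivatives of `Φ` turns `tr((D²Φ)⁻¹ ∂ᵢⱼₖD²Φ)` into `Σ Φ^{pq} Φ_{ijkpq}` and the other
traces into the quartic and cubic sums; the two cubic traces agree, whence the factor `2`.
-/

open scoped Matrix

variable {n : ℕ}

section PartialDerivative

variable {f g : (Fin n → ℝ) → ℝ} {x : Fin n → ℝ} {Ω : Set (Fin n → ℝ)}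

theorem pd_congr_of_eventuallyEq (h : f =ᶠ[nhds x] g) (i : Fin n) : pd f i x = pd g i x := by
  rw [pd, pd, h.fderiv_eq]

theorem Set.EqOn.pd_eqOn (h : Set.EqOn f g Ω) (hΩ : IsOpen Ω) (i : Fin n) :
    Set.EqOn (pd f i) (pd g i) Ω := fun _ hx =>
  pd_congr_of_eventuallyEq (Filter.eventuallyEq_of_mem (hΩ.mem_nhds hx) h) i

theorem pd_const (c : ℝ) (i : Fin n) : pd (fun _ => c) i x = 0 := by
  simp [pd]

theorem pd_add (hf : DifferentiableAt ℝ f x) (hg : DifferentiableAt ℝ g x) (i : Fin n) :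
    pd (fun y => f y + g y) i x = pd f i x + pd g i x := by
  simp [pd, fderiv_fun_add hf hg]

theorem pd_sub (hf : DifferentiableAt ℝ f x) (hg : DifferentiableAt ℝ g x) (i : Fin n) :
    pd (fun y => f y - g y) i x = pd f i x - pd g i x := by
  simp [pd, fderiv_fun_sub hf hg]

theorem pd_mul (hf : DifferentiableAt ℝ f x) (hg : DifferentiableAt ℝ g x) (i : Fin n) :
    pd (fun y => f y * g y) i x = pd f i x * g x + f x * pd g i x := by
  simp [pd, fderiv_fun_mul hf hg]; ring

theorem pd_const_mul (c : ℝ) (i : Fin n) : pd (fun y => c * f y) i x = c * pd f i x := by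
  simp [pd, show (fun y => c * f y) = c • f from rfl, fderiv_const_smul_field]

theorem pd_exp (hf : DifferentiableAt ℝ f x) (i : Fin n) :
    pd (fun y => Real.exp (f y)) i x = Real.exp (f x) * pd f i x := by
  simp [pd, fderiv_exp hf]

theorem pd_sum {ι : Type*} {s : Finset ι} {F : ι → (Fin n → ℝ) → ℝ}
    (h : ∀ j ∈ s, DifferentiableAt ℝ (F j) x) (i : Fin n) :
    pd (fun y => ∑ j ∈ s, F j y) i x = ∑ j ∈ s, pd (F j) i x := by
  simp [pd, fderiv_fun_sum h]

theorem pd_prod {ι : Type*} [DecidableEq ι] {s : Finset ι} {F : ι → (Fin n → ℝ) → ℝ}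
    (h : ∀ j ∈ s, DifferentiableAt ℝ (F j) x) (i : Fin n) :
    pd (fun y => ∏ j ∈ s, F j y) i x
      = ∑ j ∈ s, pd (F j) i x * ∏ l ∈ s.erase j, F l x := by
  simp [pd, fderiv_finsetProd h, mul_comm]

theorem pd_comp {F : (Fin n → ℝ) → ℝ} {G : (Fin n → ℝ) → Fin n → ℝ}
    (hF : DifferentiableAt ℝ F (G x)) (hG : ∀ s, DifferentiableAt ℝ (fun y => G y s) x)
    (i : Fin n) :
    pd (fun y => F (G y)) i x = ∑ s, pd (fun y => G y s) i x * pd F s (G x) := by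
  have hv : fderiv ℝ G x (Pi.single i 1) = ∑ s, pd (fun y => G y s) i x • Pi.single s 1 := by
    rw [fderiv_pi hG]
    ext t
    simp [pd, Pi.single_apply]
  change fderiv ℝ (F ∘ G) x (Pi.single i 1) = _
  rw [fderiv_comp x hF (differentiableAt_pi.mpr hG), ContinuousLinearMap.comp_apply, hv]
  simp [pd]

theorem ContDiffOn.pd {m k : WithTop ℕ∞} (hf : ContDiffOn ℝ m f Ω) (hΩ : IsOpen Ω)
    (h : k + 1 ≤ m) (i : Fin n) : ContDiffOn ℝ k (_root_.pd f i) Ω := by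
  exact (ContinuousLinearMap.apply ℝ ℝ (Pi.single i 1)).contDiff.comp_contDiffOn
    (hf.fderiv_of_isOpen hΩ h)

theorem ContDiff.pd {m k : WithTop ℕ∞} (hf : ContDiff ℝ m f) (h : k + 1 ≤ m) (i : Fin n) :
    ContDiff ℝ k (_root_.pd f i) := by
  exact (ContinuousLinearMap.apply ℝ ℝ (Pi.single i 1)).contDiff.comp (hf.fderiv_right h)

theorem pd_pd_comm (hf : ContDiffOn ℝ 2 f Ω) (hΩ : IsOpen Ω) (a b : Fin n) :
    Set.EqOn (pd (pd f a) b) (pd (pd f b) a) Ω := by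
  intro x hx
  have hf' : ContDiffOn ℝ 1 (fderiv ℝ f) Ω := hf.fderiv_of_isOpen hΩ (by norm_num)
  have hf'' : HasFDerivAt (fderiv ℝ f) (fderiv ℝ (fderiv ℝ f) x) x :=
    ((hf'.contDiffAt (hΩ.mem_nhds hx)).differentiableAt one_ne_zero).hasFDerivAt
  have hfd : ∀ᶠ y in nhds x, HasFDerivAt f (fderiv ℝ f y) y := by
    filter_upwards [hΩ.mem_nhds hx] with y hy
    exact ((hf.contDiffAt (hΩ.mem_nhds hy)).differentiableAt two_ne_zero).hasFDerivAt
  have hpd : ∀ c d : Fin n,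
      pd (pd f c) d x = fderiv ℝ (fderiv ℝ f) x (Pi.single d 1) (Pi.single c 1) := by
    intro c d
    change fderiv ℝ (ContinuousLinearMap.apply ℝ ℝ (Pi.single c 1) ∘ fderiv ℝ f) x _ = _
    rw [((ContinuousLinearMap.apply ℝ ℝ (Pi.single c 1)).hasFDerivAt.comp x hf'').fderiv]
    rfl
  rw [hpd, hpd, second_derivative_symmetric_of_eventually hfd hf'']

end PartialDerivative

section MatrixCalculus

variable {M N : (Fin n → ℝ) → Matrix (Fin n) (Fin n) ℝ} {x : Fin n → ℝ}

def pdMat (M : (Fin n → ℝ) → Matrix (Fin n) (Fin n) ℝ) (k : Fin n) (x : Fin n → ℝ) :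
    Matrix (Fin n) (Fin n) ℝ :=
  Matrix.of fun a b => pd (fun y => M y a b) k x

def EntrywiseDifferentiableAt (M : (Fin n → ℝ) → Matrix (Fin n) (Fin n) ℝ)
    (x : Fin n → ℝ) : Prop :=
  ∀ a b, DifferentiableAt ℝ (fun y => M y a b) x

theorem EntrywiseDifferentiableAt.mul (hM : EntrywiseDifferentiableAt M x)
    (hN : EntrywiseDifferentiableAt N x) : EntrywiseDifferentiableAt (fun y => M y * N y) x :=
  fun a b => by
    simp only [Matrix.mul_apply]
    exact DifferentiableAt.fun_sum fun c _ => (hM a c).mul (hN c b)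

theorem EntrywiseDifferentiableAt.differentiableAt_trace (hM : EntrywiseDifferentiableAt M x) :
    DifferentiableAt ℝ (fun y => (M y).trace) x :=
  DifferentiableAt.fun_sum fun a _ => hM a a

theorem EntrywiseDifferentiableAt.differentiableAt_det (hM : EntrywiseDifferentiableAt M x) :
    DifferentiableAt ℝ (fun y => (M y).det) x := by
  simp only [Matrix.det_apply']
  exact DifferentiableAt.fun_sum fun σ _ =>
    (HasFDerivAt.finsetProd fun i _ => (hM (σ i) i).hasFDerivAt).differentiableAt.const_mul _

theorem EntrywiseDifferentiableAt.adjugate (hM : EntrywiseDifferentiableAt M x) :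
    EntrywiseDifferentiableAt (fun y => (M y).adjugate) x := fun a b => by
  simp only [Matrix.adjugate_apply]
  refine EntrywiseDifferentiableAt.differentiableAt_det fun i j => ?_
  by_cases h : i = b
  · simp [Matrix.updateRow_apply, h]
  · simpa [Matrix.updateRow_apply, h] using hM i j

theorem EntrywiseDifferentiableAt.inv (hM : EntrywiseDifferentiableAt M x)
    (hdet : (M x).det ≠ 0) : EntrywiseDifferentiableAt (fun y => (M y)⁻¹) x := fun a b => by
  simp only [Matrix.inv_def, Ring.inverse_eq_inv', Matrix.smul_apply, smul_eq_mul]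
  exact (hM.differentiableAt_det.inv hdet).mul (hM.adjugate a b)

theorem pdMat_congr_of_eventuallyEq (h : M =ᶠ[nhds x] N) (k : Fin n) :
    pdMat M k x = pdMat N k x := by
  ext a b
  exact pd_congr_of_eventuallyEq (h.mono fun y hy => by rw [hy]) k

theorem pdMat_const (A : Matrix (Fin n) (Fin n) ℝ) (k : Fin n) :
    pdMat (fun _ => A) k x = 0 := by
  ext a b
  exact pd_const _ k

theorem pdMat_mul (hM : EntrywiseDifferentiableAt M x) (hN : EntrywiseDifferentiableAt N x)
    (k : Fin n) : pdMat (fun y => M y * N y) k x = pdMat M k x * N x + M x * pdMat N k x := by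
  ext a b
  simp only [pdMat, Matrix.mul_apply, Matrix.of_apply, Matrix.add_apply]
  rw [pd_sum fun c _ => (hM a c).fun_mul (hN c b), ← Finset.sum_add_distrib]
  exact Finset.sum_congr rfl fun c _ => pd_mul (hM a c) (hN c b) k

theorem pd_trace (hM : EntrywiseDifferentiableAt M x) (k : Fin n) :
    pd (fun y => (M y).trace) k x = (pdMat M k x).trace :=
  pd_sum (fun a _ => hM a a) k

theorem pd_det (hM : EntrywiseDifferentiableAt M x) (k : Fin n) :
    pd (fun y => (M y).det) k x = ((M x).adjugate * pdMat M k x).trace := by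
  -- Differentiating the permutation expansion replaces one column by its derivative at a time;
  -- by Cramer's rule such a determinant is a row of the adjugate applied to that column.
  have hcol : ∀ i, ((M x).updateCol i fun r => pdMat M k x r i).det
      = ∑ σ : Equiv.Perm (Fin n), ((Equiv.Perm.sign σ : ℤ) : ℝ)
          * (pd (fun y => M y (σ i) i) k x * ∏ l ∈ Finset.univ.erase i, M x (σ l) l) := by
    intro i
    rw [Matrix.det_apply']
    refine Finset.sum_congr rfl fun σ _ => ?_
    rw [← Finset.mul_prod_erase _ _ (Finset.mem_univ i)]
    congr 2
    · simp [pdMat]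
    · exact Finset.prod_congr rfl fun l hl => by
        rw [Matrix.updateCol_apply, if_neg (Finset.ne_of_mem_erase hl)]
  simp only [Matrix.det_apply']
  rw [pd_sum fun σ _ =>
    (HasFDerivAt.finsetProd fun i _ => (hM (σ i) i).hasFDerivAt).differentiableAt.const_mul _]
  simp only [pd_const_mul, pd_prod fun i _ => hM _ i, Finset.mul_sum]
  rw [Finset.sum_comm]
  simp only [← hcol, ← Matrix.cramer_apply, Matrix.cramer_eq_adjugate_mulVec, Matrix.trace,
    Matrix.diag, Matrix.mul_apply, Matrix.mulVec, dotProduct]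

theorem pdMat_inv (hM : EntrywiseDifferentiableAt M x) (hdet : (M x).det ≠ 0) (k : Fin n) :
    pdMat (fun y => (M y)⁻¹) k x = -((M x)⁻¹ * pdMat M k x * (M x)⁻¹) := by
  have hunit : IsUnit (M x).det := hdet.isUnit
  have hev : (fun y => (M y)⁻¹ * M y) =ᶠ[nhds x] fun _ => 1 := by
    filter_upwards [hM.differentiableAt_det.continuousAt.eventually_ne hdet] with y hy
    exact Matrix.nonsing_inv_mul _ hy.isUnit
  have h0 := pdMat_congr_of_eventuallyEq hev k
  rw [pdMat_mul (hM.inv hdet) hM, pdMat_const] at h0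
  have h1 := congrArg (· * (M x)⁻¹) h0
  simp only [add_mul, Matrix.mul_assoc, Matrix.mul_nonsing_inv _ hunit, Matrix.mul_one,
    zero_mul] at h1
  rw [eq_neg_iff_add_eq_zero, ← h1, Matrix.mul_assoc]

end MatrixCalculus

section Smoothness

variable {f : (Fin n → ℝ) → ℝ} {Ω : Set (Fin n → ℝ)} {m k : WithTop ℕ∞}

theorem ContDiffOn.pd2 (hf : ContDiffOn ℝ m f Ω) (hΩ : IsOpen Ω) (h : k + 2 ≤ m)
    (i j : Fin n) : ContDiffOn ℝ k (pd2 f i j) Ω :=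
  (hf.pd hΩ (k := k + 1) (by rwa [add_assoc, one_add_one_eq_two]) i).pd hΩ le_rfl j

theorem ContDiffOn.pd3 (hf : ContDiffOn ℝ m f Ω) (hΩ : IsOpen Ω) (h : k + 3 ≤ m)
    (i j l : Fin n) : ContDiffOn ℝ k (pd3 f i j l) Ω :=
  (hf.pd2 hΩ (k := k + 1) (by rwa [add_assoc, show (1 : WithTop ℕ∞) + 2 = 3 by norm_num])
    i j).pd hΩ le_rfl l

theorem ContDiffOn.pd4 (hf : ContDiffOn ℝ m f Ω) (hΩ : IsOpen Ω) (h : k + 4 ≤ m)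
    (i j l r : Fin n) : ContDiffOn ℝ k (pd4 f i j l r) Ω :=
  (hf.pd3 hΩ (k := k + 1) (by rwa [add_assoc, show (1 : WithTop ℕ∞) + 3 = 4 by norm_num])
    i j l).pd hΩ le_rfl r

theorem ContDiffOn.differentiableAt_of_isOpen (hf : ContDiffOn ℝ 1 f Ω) (hΩ : IsOpen Ω)
    {x : Fin n → ℝ} (hx : x ∈ Ω) : DifferentiableAt ℝ f x :=
  (hf.contDiffAt (hΩ.mem_nhds hx)).differentiableAt one_ne_zero

theorem ContDiffOn.differentiableAt_pd (hf : ContDiffOn ℝ m f Ω) (hΩ : IsOpen Ω) (hm : 2 ≤ m)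
    {x : Fin n → ℝ} (hx : x ∈ Ω) (i : Fin n) : DifferentiableAt ℝ (_root_.pd f i) x :=
  (hf.pd hΩ (k := 1) (by simpa [one_add_one_eq_two] using hm) i).differentiableAt_of_isOpen hΩ hx

theorem ContDiffOn.differentiableAt_pd2 (hf : ContDiffOn ℝ m f Ω) (hΩ : IsOpen Ω)
    (hm : 3 ≤ m) {x : Fin n → ℝ} (hx : x ∈ Ω) (i j : Fin n) :
    DifferentiableAt ℝ (_root_.pd2 f i j) x :=
  hf.pd2 hΩ (k := 1) ((by norm_num : (1 : WithTop ℕ∞) + 2 ≤ 3).trans hm) i j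
    |>.differentiableAt_of_isOpen hΩ hx

theorem ContDiffOn.differentiableAt_pd3 (hf : ContDiffOn ℝ m f Ω) (hΩ : IsOpen Ω)
    (hm : 4 ≤ m) {x : Fin n → ℝ} (hx : x ∈ Ω) (i j l : Fin n) :
    DifferentiableAt ℝ (_root_.pd3 f i j l) x :=
  hf.pd3 hΩ (k := 1) ((by norm_num : (1 : WithTop ℕ∞) + 3 ≤ 4).trans hm) i j l
    |>.differentiableAt_of_isOpen hΩ hx

theorem ContDiffOn.differentiableAt_pd4 (hf : ContDiffOn ℝ m f Ω) (hΩ : IsOpen Ω)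
    (hm : 5 ≤ m) {x : Fin n → ℝ} (hx : x ∈ Ω) (i j l r : Fin n) :
    DifferentiableAt ℝ (_root_.pd4 f i j l r) x :=
  hf.pd4 hΩ (k := 1) ((by norm_num : (1 : WithTop ℕ∞) + 4 ≤ 5).trans hm) i j l r
    |>.differentiableAt_of_isOpen hΩ hx

theorem pd4_rotate (hf : ContDiffOn ℝ 4 f Ω) (hΩ : IsOpen Ω) (a b c d : Fin n) :
    Set.EqOn (pd4 f a b c d) (pd4 f b c d a) Ω :=
  ((((pd_pd_comm (hf.of_le (by norm_num)) hΩ a b).pd_eqOn hΩ c).pd_eqOn hΩ d).trans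
    ((pd_pd_comm (hf.pd hΩ (by norm_num) b) hΩ a c).pd_eqOn hΩ d)).trans
    (pd_pd_comm (hf.pd2 hΩ (by norm_num) b c) hΩ a d)

theorem pd5_rotate_two (hf : ContDiffOn ℝ 5 f Ω) (hΩ : IsOpen Ω) (a b i j l : Fin n) :
    Set.EqOn (pd5 f a b i j l) (pd5 f i j l b a) Ω :=
  (((pd4_rotate (hf.of_le (by norm_num)) hΩ a b i j).pd_eqOn hΩ l).trans
    (pd_pd_comm (hf.pd3 hΩ (by norm_num) b i j) hΩ a l)).trans
    ((pd4_rotate (hf.of_le (by norm_num)) hΩ b i j l).pd_eqOn hΩ a)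

end Smoothness

section Hessian

variable {Φ : (Fin n → ℝ) → ℝ} {Ω : Set (Fin n → ℝ)} {x : Fin n → ℝ}

theorem entrywiseDifferentiableAt_hess (hΦ : ContDiffOn ℝ 3 Φ Ω) (hΩ : IsOpen Ω)
    (hx : x ∈ Ω) : EntrywiseDifferentiableAt (hess Φ) x :=
  hΦ.differentiableAt_pd2 hΩ le_rfl hx

theorem entrywiseDifferentiableAt_pdMat_hess (hΦ : ContDiffOn ℝ 4 Φ Ω) (hΩ : IsOpen Ω)
    (hx : x ∈ Ω) (k : Fin n) : EntrywiseDifferentiableAt (pdMat (hess Φ) k) x := fun a b =>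
  hΦ.differentiableAt_pd3 hΩ le_rfl hx a b k

theorem entrywiseDifferentiableAt_pdMat_pdMat_hess (hΦ : ContDiffOn ℝ 5 Φ Ω) (hΩ : IsOpen Ω)
    (hx : x ∈ Ω) (j k : Fin n) :
    EntrywiseDifferentiableAt (pdMat (pdMat (hess Φ) j) k) x := fun a b =>
  hΦ.differentiableAt_pd4 hΩ le_rfl hx a b j k

theorem entrywiseDifferentiableAt_ihess (hΦ : ContDiffOn ℝ 3 Φ Ω) (hΩ : IsOpen Ω)
    (hx : x ∈ Ω) (hdet : (hess Φ x).det ≠ 0) : EntrywiseDifferentiableAt (ihess Φ) x :=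
  (entrywiseDifferentiableAt_hess hΦ hΩ hx).inv hdet

theorem pdMat_ihess (hΦ : ContDiffOn ℝ 3 Φ Ω) (hΩ : IsOpen Ω) (hx : x ∈ Ω)
    (hdet : (hess Φ x).det ≠ 0) (k : Fin n) :
    pdMat (ihess Φ) k x = -(ihess Φ x * pdMat (hess Φ) k x * ihess Φ x) :=
  pdMat_inv (entrywiseDifferentiableAt_hess hΦ hΩ hx) hdet k

theorem hess_transpose (hΦ : ContDiffOn ℝ 2 Φ Ω) (hΩ : IsOpen Ω) (hx : x ∈ Ω) :
    (hess Φ x)ᵀ = hess Φ x := by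
  ext a b
  exact pd_pd_comm hΦ hΩ b a hx

theorem ihess_transpose (hΦ : ContDiffOn ℝ 2 Φ Ω) (hΩ : IsOpen Ω) (hx : x ∈ Ω) :
    (ihess Φ x)ᵀ = ihess Φ x := by
  rw [ihess, Matrix.transpose_nonsing_inv, hess_transpose hΦ hΩ hx]

theorem pdMat_hess_transpose (hΦ : ContDiffOn ℝ 2 Φ Ω) (hΩ : IsOpen Ω) (hx : x ∈ Ω)
    (k : Fin n) : (pdMat (hess Φ) k x)ᵀ = pdMat (hess Φ) k x := by
  ext a b
  exact (pd_pd_comm hΦ hΩ b a).pd_eqOn hΩ k hx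

theorem pdMat_pdMat_hess_transpose (hΦ : ContDiffOn ℝ 2 Φ Ω) (hΩ : IsOpen Ω) (hx : x ∈ Ω)
    (j k : Fin n) : (pdMat (pdMat (hess Φ) j) k x)ᵀ = pdMat (pdMat (hess Φ) j) k x := by
  ext a b
  exact ((pd_pd_comm hΦ hΩ b a).pd_eqOn hΩ j).pd_eqOn hΩ k hx

theorem pd_trace_ihess_mul (hΦ : ContDiffOn ℝ 3 Φ Ω) (hΩ : IsOpen Ω) (hx : x ∈ Ω)
    (hdet : (hess Φ x).det ≠ 0) {A : (Fin n → ℝ) → Matrix (Fin n) (Fin n) ℝ}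
    (hA : EntrywiseDifferentiableAt A x) (k : Fin n) :
    pd (fun y => (ihess Φ y * A y).trace) k x
      = (ihess Φ x * pdMat A k x).trace
        - (ihess Φ x * pdMat (hess Φ) k x * ihess Φ x * A x).trace := by
  have hK := entrywiseDifferentiableAt_ihess hΦ hΩ hx hdet
  rw [pd_trace (hK.mul hA), pdMat_mul hK hA, pdMat_ihess hΦ hΩ hx hdet, Matrix.trace_add,
    neg_mul, Matrix.trace_neg]
  ring

theorem pd_trace_ihess_mul_ihess_mul (hΦ : ContDiffOn ℝ 3 Φ Ω) (hΩ : IsOpen Ω)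
    (hx : x ∈ Ω) (hdet : (hess Φ x).det ≠ 0)
    {A B : (Fin n → ℝ) → Matrix (Fin n) (Fin n) ℝ}
    (hA : EntrywiseDifferentiableAt A x) (hB : EntrywiseDifferentiableAt B x) (k : Fin n) :
    pd (fun y => (ihess Φ y * A y * ihess Φ y * B y).trace) k x
      = (ihess Φ x * pdMat A k x * ihess Φ x * B x).trace
        + (ihess Φ x * A x * ihess Φ x * pdMat B k x).trace
        - (ihess Φ x * pdMat (hess Φ) k x * ihess Φ x * A x * ihess Φ x * B x).trace
        - (ihess Φ x * A x * ihess Φ x * pdMat (hess Φ) k x * ihess Φ x * B x).trace := by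
  have hK := entrywiseDifferentiableAt_ihess hΦ hΩ hx hdet
  rw [pd_trace (((hK.mul hA).mul hK).mul hB), pdMat_mul ((hK.mul hA).mul hK) hB,
    pdMat_mul (hK.mul hA) hK, pdMat_mul hK hA, pdMat_ihess hΦ hΩ hx hdet]
  simp only [add_mul, neg_mul, mul_neg, mul_assoc, Matrix.trace_add, Matrix.trace_neg]
  ring

end Hessian

section GradientComposition

variable {Φ F : (Fin n → ℝ) → ℝ} {Ω : Set (Fin n → ℝ)} {x : Fin n → ℝ}

theorem contDiffOn_comp_grad {m l : WithTop ℕ∞} (hF : ContDiff ℝ m F)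
    (hΦ : ContDiffOn ℝ l Φ Ω) (hΩ : IsOpen Ω) (h : m + 1 ≤ l) :
    ContDiffOn ℝ m (fun y => F (grad Φ y)) Ω :=
  hF.comp_contDiffOn (contDiffOn_pi.mpr fun s => hΦ.pd hΩ h s)

theorem differentiableAt_comp_grad (hF : ContDiff ℝ 1 F) (hΦ : ContDiffOn ℝ 2 Φ Ω)
    (hΩ : IsOpen Ω) (hx : x ∈ Ω) : DifferentiableAt ℝ (fun y => F (grad Φ y)) x :=
  (contDiffOn_comp_grad hF hΦ hΩ (by norm_num)).differentiableAt_of_isOpen hΩ hx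

theorem pd_comp_grad (hΦ : ContDiffOn ℝ 2 Φ Ω) (hΩ : IsOpen Ω) (hF : Differentiable ℝ F)
    (i : Fin n) :
    Set.EqOn (pd (fun y => F (grad Φ y)) i)
      (fun y => ∑ s, pd2 Φ s i y * pd F s (grad Φ y)) Ω := fun _ hy =>
  pd_comp (hF _) (hΦ.differentiableAt_pd hΩ le_rfl hy) i

theorem pd_mul_comp_grad (hΦ : ContDiffOn ℝ 2 Φ Ω) (hΩ : IsOpen Ω) (hx : x ∈ Ω)
    {u : (Fin n → ℝ) → ℝ} (hu : DifferentiableAt ℝ u x) (hF : ContDiff ℝ 1 F)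
    (k : Fin n) :
    pd (fun y => u y * F (grad Φ y)) k x
      = pd u k x * F (grad Φ x) + u x * ∑ c, pd2 Φ c k x * pd F c (grad Φ x) := by
  rw [pd_mul hu (differentiableAt_comp_grad hF hΦ hΩ hx),
    pd_comp_grad hΦ hΩ (hF.differentiable one_ne_zero) k hx]

variable {W : (Fin n → ℝ) → ℝ}

theorem pd2_comp_grad (hΦ : ContDiffOn ℝ 3 Φ Ω) (hΩ : IsOpen Ω) (hW : ContDiff ℝ 2 W)
    (i j : Fin n) :
    Set.EqOn (pd2 (fun y => W (grad Φ y)) i j)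
      (fun y => ∑ s, (pd3 Φ s i j y * pd W s (grad Φ y)
        + pd2 Φ s i y * ∑ a, pd2 Φ a j y * pd2 W s a (grad Φ y))) Ω := by
  intro y hy
  have hΦ2 : ∀ s, DifferentiableAt ℝ (pd2 Φ s i) y := fun s =>
    hΦ.differentiableAt_pd2 hΩ le_rfl hy s i
  have hWs : ∀ s, ContDiff ℝ 1 (pd W s) := fun s => hW.pd (by norm_num) s
  have hΦ' : ContDiffOn ℝ 2 Φ Ω := hΦ.of_le (by norm_num)
  rw [pd2, (pd_comp_grad hΦ' hΩ (hW.differentiable (by norm_num)) i).pd_eqOn hΩ j hy,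
    pd_sum fun s _ => (hΦ2 s).fun_mul (differentiableAt_comp_grad (hWs s) hΦ' hΩ hy)]
  exact Finset.sum_congr rfl fun s _ => pd_mul_comp_grad hΦ' hΩ hy (hΦ2 s) (hWs s) j

theorem pd3_comp_grad_eq_sum (hΦ : ContDiffOn ℝ 4 Φ Ω) (hΩ : IsOpen Ω)
    (hW : ContDiff ℝ 3 W) (hx : x ∈ Ω) (i j k : Fin n) :
    pd3 (fun y => W (grad Φ y)) i j k x
      = ∑ s, ((pd4 Φ s i j k x * pd W s (grad Φ x)
          + pd3 Φ s i j x * ∑ c, pd2 Φ c k x * pd2 W s c (grad Φ x))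
        + (pd3 Φ s i k x * ∑ a, pd2 Φ a j x * pd2 W s a (grad Φ x)
          + pd2 Φ s i x * ∑ a, (pd3 Φ a j k x * pd2 W s a (grad Φ x)
            + pd2 Φ a j x * ∑ c, pd2 Φ c k x * pd3 W s a c (grad Φ x)))) := by
  have hΦ' : ContDiffOn ℝ 2 Φ Ω := hΦ.of_le (by norm_num)
  have hΦ2 : ∀ a b, DifferentiableAt ℝ (pd2 Φ a b) x :=
    hΦ.differentiableAt_pd2 hΩ (by norm_num) hx
  have hΦ3 : ∀ s, DifferentiableAt ℝ (pd3 Φ s i j) x := fun s =>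
    hΦ.differentiableAt_pd3 hΩ le_rfl hx s i j
  have hWs : ∀ s, ContDiff ℝ 1 (pd W s) := fun s => hW.pd (by norm_num) s
  have hWsa : ∀ s a, ContDiff ℝ 1 (pd2 W s a) := fun s a =>
    (hW.pd (k := 2) (by norm_num) s).pd (by norm_num) a
  have hinner : ∀ s, DifferentiableAt ℝ
      (fun y => ∑ a, pd2 Φ a j y * pd2 W s a (grad Φ y)) x := fun s =>
    DifferentiableAt.fun_sum fun a _ =>
      (hΦ2 a j).fun_mul (differentiableAt_comp_grad (hWsa s a) hΦ' hΩ hx)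
  rw [pd3, (pd2_comp_grad (hΦ.of_le (by norm_num)) hΩ (hW.of_le (by norm_num)) i j).pd_eqOn
      hΩ k hx,
    pd_sum fun s _ => ((hΦ3 s).fun_mul (differentiableAt_comp_grad (hWs s) hΦ' hΩ hx)).fun_add
      ((hΦ2 s i).fun_mul (hinner s))]
  refine Finset.sum_congr rfl fun s _ => ?_
  rw [pd_add ((hΦ3 s).fun_mul (differentiableAt_comp_grad (hWs s) hΦ' hΩ hx))
      ((hΦ2 s i).fun_mul (hinner s)),
    pd_mul_comp_grad hΦ' hΩ hx (hΦ3 s) (hWs s), pd_mul (hΦ2 s i) (hinner s),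
    pd_sum fun a _ => (hΦ2 a j).fun_mul (differentiableAt_comp_grad (hWsa s a) hΦ' hΩ hx)]
  simp only [fun a => pd_mul_comp_grad hΦ' hΩ hx (hΦ2 a j) (hWsa s a) k]
  rfl

theorem pd3_comp_grad (hΦ : ContDiffOn ℝ 4 Φ Ω) (hΩ : IsOpen Ω) (hW : ContDiff ℝ 3 W)
    (hx : x ∈ Ω) (i j k : Fin n) :
    pd3 (fun y => W (grad Φ y)) i j k x
      = ∑ p, Wop Φ W p x * pd4 Φ i j k p x + What3 Φ W i j k x
        + ((∑ s, ∑ a, pd2 W s a (grad Φ x) * pd2 Φ a i x * pd3 Φ s j k x)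
          + (∑ s, ∑ a, pd2 W s a (grad Φ x) * pd2 Φ a j x * pd3 Φ s i k x)
          + (∑ s, ∑ a, pd2 W s a (grad Φ x) * pd2 Φ a k x * pd3 Φ s i j x)) := by
  have hWsymm : ∀ s a, pd2 W s a (grad Φ x) = pd2 W a s (grad Φ x) := fun s a =>
    pd_pd_comm (hW.of_le (by norm_num)).contDiffOn isOpen_univ s a (Set.mem_univ _)
  have h1 : ∑ s, pd4 Φ s i j k x * pd W s (grad Φ x) = ∑ p, Wop Φ W p x * pd4 Φ i j k p x :=
    Finset.sum_congr rfl fun s _ => by rw [pd4_rotate hΦ hΩ s i j k hx, mul_comm]; rfl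
  have h2 : ∀ l r t : Fin n, ∑ s, pd3 Φ s l r x * ∑ a, pd2 Φ a t x * pd2 W s a (grad Φ x)
      = ∑ s, ∑ a, pd2 W s a (grad Φ x) * pd2 Φ a t x * pd3 Φ s l r x := fun l r t =>
    Finset.sum_congr rfl fun s _ => by
      rw [Finset.mul_sum]; exact Finset.sum_congr rfl fun a _ => by ring
  have h3 : ∑ s, pd2 Φ s i x * ∑ a, pd3 Φ a j k x * pd2 W s a (grad Φ x)
      = ∑ s, ∑ a, pd2 W s a (grad Φ x) * pd2 Φ a i x * pd3 Φ s j k x := by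
    simp only [Finset.mul_sum]
    rw [Finset.sum_comm]
    exact Finset.sum_congr rfl fun s _ => Finset.sum_congr rfl fun a _ => by rw [hWsymm]; ring
  have h4 : ∑ s, pd2 Φ s i x * ∑ a, pd2 Φ a j x
        * ∑ c, pd2 Φ c k x * pd3 W s a c (grad Φ x) = What3 Φ W i j k x := by
    simp only [Finset.mul_sum]
    exact Finset.sum_congr rfl fun s _ => Finset.sum_congr rfl fun a _ =>
      Finset.sum_congr rfl fun c _ => by ring
  rw [pd3_comp_grad_eq_sum hΦ hΩ hW hx]
  simp only [Finset.sum_add_distrib, mul_add, h1, h2, h3, h4]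
  ring

end GradientComposition

section TraceFormulas

variable {ι R : Type*} [Fintype ι] [CommRing R]

theorem trace_mul_mul_mul_comm (K A B : Matrix ι ι R) :
    (K * A * K * B).trace = (K * B * K * A).trace := by
  rw [mul_assoc (K * A), Matrix.trace_mul_comm, ← mul_assoc]

theorem trace_mul_mul_mul_mul_mul_cycle (K A B C : Matrix ι ι R) :
    (K * A * K * B * K * C).trace = (K * C * K * A * K * B).trace := by
  rw [mul_assoc (K * A * K * B), Matrix.trace_mul_comm]
  simp only [mul_assoc]

theorem trace_mul_mul_mul_mul_mul_reverse {K A B C : Matrix ι ι R} (hK : Kᵀ = K) (hA : Aᵀ = A)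
    (hB : Bᵀ = B) (hC : Cᵀ = C) :
    (K * A * K * B * K * C).trace = (K * C * K * B * K * A).trace := by
  rw [← Matrix.trace_transpose]
  simp only [Matrix.transpose_mul, hK, hA, hB, hC, ← mul_assoc]
  rw [Matrix.trace_mul_comm]
  simp only [← mul_assoc]

theorem trace_mul_mul_mul_eq_sum {K B : Matrix ι ι R} (hK : Kᵀ = K) (hB : Bᵀ = B)
    (A : Matrix ι ι R) :
    (K * A * K * B).trace = ∑ a, ∑ b, ∑ p, ∑ q, A a b * K a p * K b q * B p q := by
  have hKBK : (K * (B * K))ᵀ = K * (B * K) := by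
    rw [Matrix.transpose_mul, Matrix.transpose_mul, hK, hB, mul_assoc]
  have hKsymm : ∀ i j, K i j = K j i := fun i j => congrFun (congrFun hK j) i
  calc (K * A * K * B).trace = (A * (K * (B * K))).trace := by
        rw [mul_assoc, mul_assoc, Matrix.trace_mul_comm, mul_assoc, mul_assoc]
    _ = ∑ a, ∑ b, A a b * (K * (B * K))ᵀ a b := by
        simp only [Matrix.trace, Matrix.diag, Matrix.transpose_apply, Matrix.mul_apply (M := A)]
    _ = ∑ a, ∑ b, ∑ p, ∑ q, A a b * K a p * K b q * B p q := by
        rw [hKBK]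
        simp only [Matrix.mul_apply, Finset.mul_sum]
        refine Finset.sum_congr rfl fun a _ => Finset.sum_congr rfl fun b _ =>
          Finset.sum_congr rfl fun p _ => Finset.sum_congr rfl fun q _ => ?_
        rw [hKsymm q b]
        ring

theorem trace_mul_mul_mul_mul_mul_eq_sum (K A B C : Matrix ι ι R) :
    (K * A * K * B * K * C).trace
      = ∑ a, ∑ b, ∑ c, ∑ p, ∑ q, ∑ r,
          A p b * B q c * C r a * K a p * K b q * K c r := by
  calc (K * A * K * B * K * C).trace
        = ∑ a, ∑ b, ∑ c, (K * A) a b * ((K * B) b c * (K * C) c a) := by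
        rw [show K * A * K * B * K * C = K * A * ((K * B) * (K * C)) by simp only [mul_assoc]]
        simp only [Matrix.trace, Matrix.diag, Matrix.mul_apply, Finset.mul_sum]
    _ = _ := by
        simp only [Matrix.mul_apply, Finset.sum_mul]
        simp only [Finset.mul_sum]
        iterate 6 refine Finset.sum_congr rfl fun _ _ => ?_
        ring

end TraceFormulas

section MongeAmpere

variable {Φ V W : (Fin n → ℝ) → ℝ} {Ω : Set (Fin n → ℝ)}

theorem det_hess_eqOn_exp
    (hMA : ∀ x ∈ Ω, Real.exp (-V x) = Real.exp (-W (grad Φ x)) * (hess Φ x).det) :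
    Set.EqOn (fun y => (hess Φ y).det) (fun y => Real.exp (W (grad Φ y) - V y)) Ω := by
  intro y hy
  dsimp only
  rw [sub_eq_add_neg, Real.exp_add, hMA y hy, ← mul_assoc, ← Real.exp_add, add_neg_cancel,
    Real.exp_zero, one_mul]

theorem mongeAmpere_pd (hΦ : ContDiffOn ℝ 3 Φ Ω) (hΩ : IsOpen Ω) (hV : ContDiffOn ℝ 1 V Ω)
    (hW : ContDiff ℝ 1 W) (hdet : ∀ y ∈ Ω, (hess Φ y).det ≠ 0)
    (hMA : ∀ x ∈ Ω, Real.exp (-V x) = Real.exp (-W (grad Φ x)) * (hess Φ x).det)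
    (i : Fin n) :
    Set.EqOn (fun y => (ihess Φ y * pdMat (hess Φ) i y).trace)
      (fun y => pd (fun z => W (grad Φ z)) i y - pd V i y) Ω := by
  intro y hy
  have hg := differentiableAt_comp_grad hW (hΦ.of_le (by norm_num)) hΩ hy
  have hV' := hV.differentiableAt_of_isOpen hΩ hy
  have h := (det_hess_eqOn_exp hMA).pd_eqOn hΩ i hy
  have hexp : (hess Φ y).det = Real.exp (W (grad Φ y) - V y) := det_hess_eqOn_exp hMA hy
  have hadj : (hess Φ y).adjugate = (hess Φ y).det • ihess Φ y := by
    rw [ihess, Matrix.inv_def, smul_smul, Ring.inverse_eq_inv', mul_inv_cancel₀ (hdet y hy),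
      one_smul]
  rw [pd_det (entrywiseDifferentiableAt_hess hΦ hΩ hy),
    pd_exp (f := fun z => W (grad Φ z) - V z) (hg.fun_sub hV'), pd_sub hg hV',
    ← hexp, hadj, Matrix.smul_mul, Matrix.trace_smul, smul_eq_mul] at h
  exact mul_left_cancel₀ (hdet y hy) h

theorem mongeAmpere_pd2 (hΦ : ContDiffOn ℝ 4 Φ Ω) (hΩ : IsOpen Ω)
    (hV : ContDiffOn ℝ 2 V Ω) (hW : ContDiff ℝ 2 W)
    (hdet : ∀ y ∈ Ω, (hess Φ y).det ≠ 0)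
    (hMA : ∀ x ∈ Ω, Real.exp (-V x) = Real.exp (-W (grad Φ x)) * (hess Φ x).det)
    (i j : Fin n) :
    Set.EqOn
      (fun y => (ihess Φ y * pdMat (pdMat (hess Φ) i) j y).trace
        - (ihess Φ y * pdMat (hess Φ) j y * ihess Φ y * pdMat (hess Φ) i y).trace)
      (fun y => pd2 (fun z => W (grad Φ z)) i j y - pd2 V i j y) Ω := by
  intro y hy
  have hg : DifferentiableAt ℝ (pd (fun z => W (grad Φ z)) i) y :=
    (contDiffOn_comp_grad hW hΦ hΩ (by norm_num)).differentiableAt_pd hΩ le_rfl hy i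
  have hV' : DifferentiableAt ℝ (pd V i) y := hV.differentiableAt_pd hΩ le_rfl hy i
  have h := (mongeAmpere_pd (hΦ.of_le (by norm_num)) hΩ (hV.of_le (by norm_num))
    (hW.of_le (by norm_num)) hdet hMA i).pd_eqOn hΩ j hy
  rw [pd_trace_ihess_mul (hΦ.of_le (by norm_num)) hΩ hy (hdet y hy)
    (entrywiseDifferentiableAt_pdMat_hess hΦ hΩ hy i), pd_sub hg hV'] at h
  exact h

theorem mongeAmpere_pd3 (hΦ : ContDiffOn ℝ 5 Φ Ω) (hΩ : IsOpen Ω)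
    (hV : ContDiffOn ℝ 3 V Ω) (hW : ContDiff ℝ 3 W)
    (hdet : ∀ y ∈ Ω, (hess Φ y).det ≠ 0)
    (hMA : ∀ x ∈ Ω, Real.exp (-V x) = Real.exp (-W (grad Φ x)) * (hess Φ x).det)
    {x : Fin n → ℝ} (hx : x ∈ Ω) (i j k : Fin n) :
    (ihess Φ x * pdMat (pdMat (pdMat (hess Φ) i) j) k x).trace
        - (ihess Φ x * pdMat (hess Φ) k x * ihess Φ x * pdMat (pdMat (hess Φ) i) j x).trace
        - ((ihess Φ x * pdMat (pdMat (hess Φ) j) k x * ihess Φ x * pdMat (hess Φ) i x).trace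
          + (ihess Φ x * pdMat (hess Φ) j x * ihess Φ x * pdMat (pdMat (hess Φ) i) k x).trace
          - (ihess Φ x * pdMat (hess Φ) k x * ihess Φ x * pdMat (hess Φ) j x * ihess Φ x
              * pdMat (hess Φ) i x).trace
          - (ihess Φ x * pdMat (hess Φ) j x * ihess Φ x * pdMat (hess Φ) k x * ihess Φ x
              * pdMat (hess Φ) i x).trace)
      = pd3 (fun z => W (grad Φ z)) i j k x - pd3 V i j k x := by
  have hΦ3 : ContDiffOn ℝ 3 Φ Ω := hΦ.of_le (by norm_num)
  have hK := entrywiseDifferentiableAt_ihess hΦ3 hΩ hx (hdet x hx)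
  have hD := entrywiseDifferentiableAt_pdMat_hess (hΦ.of_le (by norm_num)) hΩ hx
  have hD2 := entrywiseDifferentiableAt_pdMat_pdMat_hess hΦ hΩ hx
  have hg : DifferentiableAt ℝ (pd2 (fun z => W (grad Φ z)) i j) x :=
    (contDiffOn_comp_grad hW hΦ hΩ (by norm_num)).differentiableAt_pd2 hΩ le_rfl hx i j
  have hV' : DifferentiableAt ℝ (pd2 V i j) x := hV.differentiableAt_pd2 hΩ le_rfl hx i j
  have h := (mongeAmpere_pd2 (hΦ.of_le (by norm_num)) hΩ (hV.of_le (by norm_num))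
    (hW.of_le (by norm_num)) hdet hMA i j).pd_eqOn hΩ k hx
  rw [pd_sub (f := fun y => (ihess Φ y * pdMat (pdMat (hess Φ) i) j y).trace)
      (hK.mul (hD2 i j)).differentiableAt_trace
      (((hK.mul (hD j)).mul hK).mul (hD i)).differentiableAt_trace,
    pd_trace_ihess_mul hΦ3 hΩ hx (hdet x hx) (hD2 i j),
    pd_trace_ihess_mul_ihess_mul hΦ3 hΩ hx (hdet x hx) (hD j) (hD i), pd_sub hg hV'] at h
  exact h

end MongeAmpere

section HessianTraces

variable {Φ : (Fin n → ℝ) → ℝ} {Ω : Set (Fin n → ℝ)} {x : Fin n → ℝ}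

theorem trace_ihess_mul_pdMat_pdMat_pdMat_hess (hΦ : ContDiffOn ℝ 5 Φ Ω) (hΩ : IsOpen Ω)
    (hx : x ∈ Ω) (i j k : Fin n) :
    (ihess Φ x * pdMat (pdMat (pdMat (hess Φ) i) j) k x).trace
      = ∑ p, ∑ q, ihess Φ x p q * pd5 Φ i j k p q x := by
  simp only [Matrix.trace, Matrix.diag, Matrix.mul_apply]
  exact Finset.sum_congr rfl fun p _ => Finset.sum_congr rfl fun q _ => by
    rw [← pd5_rotate_two hΦ hΩ q p i j k hx]; rfl

theorem trace_ihess_mul_pdMat_hess_mul_ihess_mul_pdMat_pdMat_hess (hΦ : ContDiffOn ℝ 2 Φ Ω)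
    (hΩ : IsOpen Ω) (hx : x ∈ Ω) (i j k : Fin n) :
    (ihess Φ x * pdMat (hess Φ) i x * ihess Φ x * pdMat (pdMat (hess Φ) j) k x).trace
      = ∑ a, ∑ b, ∑ p, ∑ q,
          pd3 Φ a b i x * ihess Φ x a p * ihess Φ x b q * pd4 Φ p q j k x :=
  trace_mul_mul_mul_eq_sum (ihess_transpose hΦ hΩ hx)
    (pdMat_pdMat_hess_transpose hΦ hΩ hx j k) _

theorem trace_ihess_mul_pdMat_hess_cube (i j k : Fin n) :
    (ihess Φ x * pdMat (hess Φ) i x * ihess Φ x * pdMat (hess Φ) j x * ihess Φ x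
        * pdMat (hess Φ) k x).trace
      = ∑ a, ∑ b, ∑ c, ∑ p, ∑ q, ∑ r, pd3 Φ p b i x * pd3 Φ q c j x * pd3 Φ r a k x
          * ihess Φ x a p * ihess Φ x b q * ihess Φ x c r :=
  trace_mul_mul_mul_mul_mul_eq_sum _ _ _ _

end HessianTraces

theorem stmt_4_general {n : ℕ} (Ω : Set (Fin n → ℝ)) (hΩ : IsOpen Ω)
    (Φ V W : (Fin n → ℝ) → ℝ)
    (hΦ : ContDiffOn ℝ 5 Φ Ω)
    (hpos : ∀ x ∈ Ω, (hess Φ x).PosDef)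
    (hV : ContDiffOn ℝ 3 V Ω) (hW : ContDiff ℝ 3 W)
    (hMA : ∀ x ∈ Ω, Real.exp (-V x) = Real.exp (-W (grad Φ x)) * (hess Φ x).det) :
    ∀ x ∈ Ω, ∀ i j k : Fin n,
      (∑ p, ∑ q, ihess Φ x p q * pd5 Φ i j k p q x)
        - (∑ p, Wop Φ W p x * pd4 Φ i j k p x)
      = -(pd3 V i j k x) + What3 Φ W i j k x
        + ((∑ s, ∑ a, pd2 W s a (grad Φ x) * pd2 Φ a i x * pd3 Φ s j k x)
          + (∑ s, ∑ a, pd2 W s a (grad Φ x) * pd2 Φ a j x * pd3 Φ s i k x)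
          + (∑ s, ∑ a, pd2 W s a (grad Φ x) * pd2 Φ a k x * pd3 Φ s i j x))
        + ((∑ a, ∑ b, ∑ p, ∑ q, pd3 Φ a b i x * ihess Φ x a p * ihess Φ x b q * pd4 Φ p q j k x)
          + (∑ a, ∑ b, ∑ p, ∑ q, pd3 Φ a b j x * ihess Φ x a p * ihess Φ x b q * pd4 Φ p q i k x)
          + (∑ a, ∑ b, ∑ p, ∑ q, pd3 Φ a b k x * ihess Φ x a p * ihess Φ x b q * pd4 Φ p q i j x))
        - 2 * ∑ a, ∑ b, ∑ c, ∑ p, ∑ q, ∑ r,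
            pd3 Φ p b i x * pd3 Φ q c j x * pd3 Φ r a k x
              * ihess Φ x a p * ihess Φ x b q * ihess Φ x c r := by
  intro x hx i j k
  have hΦ2 : ContDiffOn ℝ 2 Φ Ω := hΦ.of_le (by norm_num)
  have hD := pdMat_hess_transpose hΦ2 hΩ hx
  have h := mongeAmpere_pd3 hΦ hΩ hV hW (fun y hy => (hpos y hy).det_pos.ne') hMA hx i j k
  rw [pd3_comp_grad (hΦ.of_le (by norm_num)) hΩ hW hx,
    trace_mul_mul_mul_comm _ (pdMat (pdMat (hess Φ) j) k x),
    trace_mul_mul_mul_mul_mul_cycle _ (pdMat (hess Φ) j x),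
    trace_mul_mul_mul_mul_mul_reverse (ihess_transpose hΦ2 hΩ hx) (hD k) (hD j) (hD i),
    trace_ihess_mul_pdMat_pdMat_pdMat_hess hΦ hΩ hx,
    trace_ihess_mul_pdMat_hess_mul_ihess_mul_pdMat_pdMat_hess hΦ2 hΩ hx,
    trace_ihess_mul_pdMat_hess_mul_ihess_mul_pdMat_pdMat_hess hΦ2 hΩ hx,
    trace_ihess_mul_pdMat_hess_mul_ihess_mul_pdMat_pdMat_hess hΦ2 hΩ hx,
    trace_ihess_mul_pdMat_hess_cube] at h
  linarith

/-- the weighted Laplacian of the scalar `Φ_{ijk}` (fixed indices). -/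
theorem stmt_4 {n : ℕ} (Ω : Set (Fin n → ℝ)) (hΩ : IsOpen Ω)
    (Φ V W : (Fin n → ℝ) → ℝ)
    (hΦ : ContDiffOn ℝ 5 Φ Ω) (hΦconv : ConvexOn ℝ Ω Φ)
    (hpos : ∀ x ∈ Ω, (hess Φ x).PosDef)
    (hV : ContDiffOn ℝ 3 V Ω) (hW : ContDiff ℝ 3 W)
    (hMA : ∀ x ∈ Ω, Real.exp (-V x) = Real.exp (-W (grad Φ x)) * (hess Φ x).det) :
    ∀ x ∈ Ω, ∀ i j k : Fin n,
      (∑ p, ∑ q, ihess Φ x p q * pd5 Φ i j k p q x)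
        - (∑ p, Wop Φ W p x * pd4 Φ i j k p x)
      = -(pd3 V i j k x) + What3 Φ W i j k x
        + ((∑ s, ∑ a, pd2 W s a (grad Φ x) * pd2 Φ a i x * pd3 Φ s j k x)
          + (∑ s, ∑ a, pd2 W s a (grad Φ x) * pd2 Φ a j x * pd3 Φ s i k x)
          + (∑ s, ∑ a, pd2 W s a (grad Φ x) * pd2 Φ a k x * pd3 Φ s i j x))
        + ((∑ a, ∑ b, ∑ p, ∑ q, pd3 Φ a b i x * ihess Φ x a p * ihess Φ x b q * pd4 Φ p q j k x)
          + (∑ a, ∑ b, ∑ p, ∑ q, pd3 Φ a b j x * ihess Φ x a p * ihess Φ x b q * pd4 Φ p q i k x)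
          + (∑ a, ∑ b, ∑ p, ∑ q, pd3 Φ a b k x * ihess Φ x a p * ihess Φ x b q * pd4 Φ p q i j x))
        - 2 * ∑ a, ∑ b, ∑ c, ∑ p, ∑ q, ∑ r,
            pd3 Φ p b i x * pd3 Φ q c j x * pd3 Φ r a k x
              * ihess Φ x a p * ihess Φ x b q * ihess Φ x c r :=
  stmt_4_general Ω hΩ Φ V W hΦ hpos hV hW hMA
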